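/- arXiv:1909.07892 — 4 statements merged into one kernel-verified Lean document; each statement's English description precedes it below -/
import Mathlib

section
/- A vector field X on a contact Hamiltonian system (M, η, H) satisfies η([X_H, X]) = 0 (X is a dynamical symmetry) if and only if f = −η(X) is a dissipated quantity, i.e. {H, f} = 0. -/
open ContinuousLinearMap in
/-- Exterior derivative of a 1-form `η` at `x`, as a bilinear map:
`dη(v,w) = (D_v η)(w) - (D_w η)(v)`. -/
noncomputable def dEta {E : Type*} [NormedAddCommGroup E] [NormedSpace ℝ E]
    (η : E → (E →L[ℝ] ℝ)) (x : E) : E →L[ℝ] E →L[ℝ] ℝ :=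
  fderiv ℝ η x - (fderiv ℝ η x).flip

open ContinuousLinearMap in
/-- The contact flat map `♭(v) = ι_v dη + η(v) η` at a point. -/
noncomputable def flatMap {E : Type*} [NormedAddCommGroup E] [NormedSpace ℝ E]
    (η : E → (E →L[ℝ] ℝ)) (x : E) : E →L[ℝ] (E →L[ℝ] ℝ) :=
  dEta η x + (η x).smulRight (η x)

/-- Action of a vector field on a function: `X(f)(x) = df_x(X(x))`. -/
noncomputable def vfApply {E : Type*} [NormedAddCommGroup E] [NormedSpace ℝ E]
    (X : E → E) (f : E → ℝ) : E → ℝ :=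
  fun x => fderiv ℝ f x (X x)

/-- Lie bracket of vector fields. -/
noncomputable def lieBr {E : Type*} [NormedAddCommGroup E] [NormedSpace ℝ E]
    (X Y : E → E) : E → E :=
  fun x => fderiv ℝ Y x (X x) - fderiv ℝ X x (Y x)

/-- Lie derivative of a 1-form along a vector field:
`(L_X η)(w) = (D_{X} η)(w) + η(D_w X)`. -/
noncomputable def lieD {E : Type*} [NormedAddCommGroup E] [NormedSpace ℝ E]
    (X : E → E) (η : E → (E →L[ℝ] ℝ)) : E → (E →L[ℝ] ℝ) :=
  fun x => fderiv ℝ η x (X x) + (η x).comp (fderiv ℝ X x)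

/-- `R` is the Reeb vector field of `η`: `η(R) = 1` and `ι_R dη = 0`. -/
def IsReeb {E : Type*} [NormedAddCommGroup E] [NormedSpace ℝ E]
    (η : E → (E →L[ℝ] ℝ)) (R : E → E) : Prop :=
  ∀ x, η x (R x) = 1 ∧ ∀ v, dEta η x (R x) v = 0

/-- The contact condition: no nonzero vector lies in `ker η ∩ ker dη`
(equivalent to `η ∧ (dη)^n` being a volume form). -/
def IsContact {E : Type*} [NormedAddCommGroup E] [NormedSpace ℝ E]
    (η : E → (E →L[ℝ] ℝ)) : Prop :=
  ∀ x v, η x v = 0 → (∀ w, dEta η x v w = 0) → v = 0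

/-- `XH` is the contact Hamiltonian vector field of `H`:
`♭(X_H) = dH - (R(H) + H) η`. -/
def IsHamVF {E : Type*} [NormedAddCommGroup E] [NormedSpace ℝ E]
    (η : E → (E →L[ℝ] ℝ)) (R : E → E) (H : E → ℝ) (XH : E → E) : Prop :=
  ∀ x, flatMap η x (XH x) = fderiv ℝ H x - (vfApply R H x + H x) • η x

lemma fderiv_clm_apply_vf {E : Type*} [NormedAddCommGroup E] [NormedSpace ℝ E]
    (η : E → (E →L[ℝ] ℝ)) (Y : E → E) (hη : Differentiable ℝ η)
    (hY : Differentiable ℝ Y) (x v : E) :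
    fderiv ℝ (fun y => η y (Y y)) x v
      = fderiv ℝ η x v (Y x) + η x (fderiv ℝ Y x v) := by
  rw [((hη x).hasFDerivAt.clm_apply (hY x).hasFDerivAt).fderiv]
  simp [ContinuousLinearMap.flip_apply]
  ring

/-- `X` is a dynamical symmetry (`η([X_H, X]) = 0`) iff `f = -η(X)` is a
dissipated quantity (`X_H(f) = -R(H) f`). -/
theorem dynamical_symmetry_iff_dissipated
    {E : Type*} [NormedAddCommGroup E] [NormedSpace ℝ E]
    (η : E → (E →L[ℝ] ℝ)) (R : E → E) (H : E → ℝ) (X XH : E → E)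
    (hη : ContDiff ℝ (⊤ : ℕ∞) η) (hH : ContDiff ℝ (⊤ : ℕ∞) H)
    (hXs : ContDiff ℝ (⊤ : ℕ∞) X) (hXHs : ContDiff ℝ (⊤ : ℕ∞) XH)
    (hR : IsReeb η R) (hXH : IsHamVF η R H XH) :
    (∀ x, η x (lieBr XH X x) = 0) ↔
    (∀ x, vfApply XH (fun y => -(η y (X y))) x
      = -(vfApply R H x) * (-(η x (X x)))) := by
  have hηd : Differentiable ℝ η := hη.differentiable (by simp)
  have hHd : Differentiable ℝ H := hH.differentiable (by simp)
  have hXd : Differentiable ℝ X := hXs.differentiable (by simp)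
  have hXHd : Differentiable ℝ XH := hXHs.differentiable (by simp)
  -- η(XH) = -H everywhere
  have hηXH : ∀ x, η x (XH x) = -(H x) := by
    intro x
    have h1 := congrArg (fun L => L (R x)) (hXH x)
    simp only [flatMap, dEta, ContinuousLinearMap.add_apply,
      ContinuousLinearMap.sub_apply, ContinuousLinearMap.smulRight_apply,
      ContinuousLinearMap.flip_apply, ContinuousLinearMap.smul_apply,
      smul_eq_mul] at h1
    have hR1 := (hR x).1
    have hR2 := (hR x).2 (XH x)
    simp only [dEta, ContinuousLinearMap.sub_apply,
      ContinuousLinearMap.flip_apply] at hR2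
    rw [hR1] at h1
    have : vfApply R H x = fderiv ℝ H x (R x) := rfl
    nlinarith [h1, hR2]
  -- dEta(XH, v) = dH(v) - R(H) η(v)
  have hdEtaXH : ∀ x v, fderiv ℝ η x (XH x) v - fderiv ℝ η x v (XH x)
      = fderiv ℝ H x v - vfApply R H x * η x v := by
    intro x v
    have h1 := congrArg (fun L => L v) (hXH x)
    simp only [flatMap, dEta, ContinuousLinearMap.add_apply,
      ContinuousLinearMap.sub_apply, ContinuousLinearMap.smulRight_apply,
      ContinuousLinearMap.flip_apply, ContinuousLinearMap.smul_apply,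
      smul_eq_mul] at h1
    rw [hηXH x] at h1
    linarith
  -- differentiate η(XH) = -H
  have hderXH : ∀ x v, fderiv ℝ η x v (XH x) + η x (fderiv ℝ XH x v)
      = -(fderiv ℝ H x v) := by
    intro x v
    have hfun : (fun y => η y (XH y)) = fun y => -(H y) := funext hηXH
    have h1 := fderiv_clm_apply_vf η XH hηd hXHd x v
    rw [hfun] at h1
    rw [fderiv_fun_neg] at h1
    simp only [ContinuousLinearMap.neg_apply] at h1
    linarith
  constructor
  · intro hsym x
    have hb := hsym x
    simp only [lieBr, map_sub] at hb
    have h1 : vfApply XH (fun y => -(η y (X y))) x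
        = -(fderiv ℝ (fun y => η y (X y)) x (XH x)) := by
      simp only [vfApply]
      rw [fderiv_fun_neg]
      simp
    rw [h1, fderiv_clm_apply_vf η X hηd hXd x (XH x)]
    have h2 := hdEtaXH x (X x)
    have h3 := hderXH x (X x)
    nlinarith [hb, h2, h3]
  · intro hdis x
    have hb := hdis x
    have h1 : vfApply XH (fun y => -(η y (X y))) x
        = -(fderiv ℝ (fun y => η y (X y)) x (XH x)) := by
      simp only [vfApply]
      rw [fderiv_fun_neg]
      simp
    rw [h1, fderiv_clm_apply_vf η X hηd hXd x (XH x)] at hb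
    simp only [lieBr, map_sub]
    have h2 := hdEtaXH x (X x)
    have h3 := hderXH x (X x)
    nlinarith [hb, h2, h3]
end

section
/- Let X be a Cartan symmetry of a contact Hamiltonian system (M, η, H), i.e. L_X η = a η + dg and X(H) = aH + g R(H) for smooth functions a, g. Then f = η(X) − g is a dissipated quantity: {H, f} = 0. -/
/-- If `X` is a Cartan symmetry (`L_X η = a η + dg`, `X(H) = aH + g R(H)`),
then `f = η(X) - g` is a dissipated quantity: `{H, f} = X_H(f) + f R(H) = 0`. -/
theorem cartan_symmetry_dissipated
    {E : Type*} [NormedAddCommGroup E] [NormedSpace ℝ E]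
    (η : E → (E →L[ℝ] ℝ)) (R : E → E) (H a g : E → ℝ) (X XH : E → E)
    (hη : ContDiff ℝ (⊤ : ℕ∞) η) (hH : ContDiff ℝ (⊤ : ℕ∞) H)
    (ha : ContDiff ℝ (⊤ : ℕ∞) a) (hg : ContDiff ℝ (⊤ : ℕ∞) g)
    (hXs : ContDiff ℝ (⊤ : ℕ∞) X) (hXHs : ContDiff ℝ (⊤ : ℕ∞) XH)
    (hR : IsReeb η R) (hXH : IsHamVF η R H XH)
    (hcartan : ∀ x, lieD X η x = a x • η x + fderiv ℝ g x)
    (hXH' : ∀ x, vfApply X H x = a x * H x + g x * vfApply R H x) :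
    ∀ x, vfApply XH (fun y => η y (X y) - g y) x
      + (η x (X x) - g x) * vfApply R H x = 0 := by
  intro x
  have hηd : DifferentiableAt ℝ η x := hη.differentiable (by simp) x
  have hXd : DifferentiableAt ℝ X x := hXs.differentiable (by simp) x
  have hgd : DifferentiableAt ℝ g x := hg.differentiable (by simp) x
  -- expand the derivative of f = η(X) - g
  have hfd : vfApply XH (fun y => η y (X y) - g y) x
      = fderiv ℝ η x (XH x) (X x) + η x (fderiv ℝ X x (XH x)) - fderiv ℝ g x (XH x) := by
    unfold vfApply
    rw [fderiv_fun_sub (hηd.clm_apply hXd) hgd, fderiv_clm_apply hηd hXd]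
    simp [ContinuousLinearMap.flip_apply]
    ring
  -- Cartan condition evaluated at XH x
  have hc := congrArg (fun L : E →L[ℝ] ℝ => L (XH x)) (hcartan x)
  simp only [lieD, ContinuousLinearMap.add_apply, ContinuousLinearMap.comp_apply,
    ContinuousLinearMap.smul_apply, smul_eq_mul] at hc
  -- Hamiltonian condition evaluated at R x : η(XH) = -H
  have h3 := congrArg (fun L : E →L[ℝ] ℝ => L (R x)) (hXH x)
  have hskew : dEta η x (XH x) (R x) = - dEta η x (R x) (XH x) := by
    simp [dEta, ContinuousLinearMap.sub_apply, ContinuousLinearMap.flip_apply]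
  simp only [flatMap, ContinuousLinearMap.add_apply, ContinuousLinearMap.sub_apply,
    ContinuousLinearMap.smulRight_apply, ContinuousLinearMap.smul_apply, smul_eq_mul,
    hskew, (hR x).2 (XH x), (hR x).1, neg_zero, zero_add, mul_one] at h3
  -- h3 : η x (XH x) = fderiv ℝ H x (R x) - (vfApply R H x + H x)
  have hRH : vfApply R H x = fderiv ℝ H x (R x) := rfl
  -- Hamiltonian condition evaluated at X x
  have h4 := congrArg (fun L : E →L[ℝ] ℝ => L (X x)) (hXH x)
  simp only [flatMap, dEta, ContinuousLinearMap.add_apply, ContinuousLinearMap.sub_apply,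
    ContinuousLinearMap.smulRight_apply, ContinuousLinearMap.smul_apply, smul_eq_mul,
    ContinuousLinearMap.flip_apply] at h4
  have h5 := hXH' x
  have hXHX : vfApply X H x = fderiv ℝ H x (X x) := rfl
  rw [hXHX] at h5
  rw [hfd]
  rw [hRH] at h3 h4 h5 ⊢
  linear_combination hc + h4 + h5 + (a x - η x (X x)) * h3
end

section
/- For Y a vector field on Q with complete lift Y^C and vertical lift Y^V to TQ (extended naturally to TQ × ℝ), and η_L = dz − S*(dL) the contact Lagrangian form: η_L(Y^C) = −Y^V(L), and L_{Y^C} η_L = −(∂(Y^C(L))/∂q̇^i) dq^i. -/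
/-- Phase space `TQ × ℝ` for `Q = ℝⁿ`: coordinates `(q, q̇, z)`. -/
abbrev Phase (n : ℕ) := (Fin n → ℝ) × (Fin n → ℝ) × ℝ

/-- `∂L/∂q̇ⁱ`. -/
noncomputable def dLdv {n : ℕ} (L : Phase n → ℝ) (p : Phase n) (i : Fin n) : ℝ :=
  fderiv ℝ L p (0, Pi.single i 1, 0)

/-- `∂L/∂z`. -/
noncomputable def dLdz {n : ℕ} (L : Phase n → ℝ) (p : Phase n) : ℝ :=
  fderiv ℝ L p (0, 0, 1)

/-- The coordinate 1-form `dqⁱ`. -/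
noncomputable def dq {n : ℕ} (i : Fin n) : Phase n →L[ℝ] ℝ :=
  (ContinuousLinearMap.proj i).comp (ContinuousLinearMap.fst ℝ _ _)

/-- The coordinate 1-form `dz`. -/
noncomputable def dz (n : ℕ) : Phase n →L[ℝ] ℝ :=
  (ContinuousLinearMap.snd ℝ _ _).comp (ContinuousLinearMap.snd ℝ _ _)

/-- The contact Lagrangian form `η_L = dz - (∂L/∂q̇ⁱ) dqⁱ`. -/
noncomputable def etaL {n : ℕ} (L : Phase n → ℝ) : Phase n → (Phase n →L[ℝ] ℝ) :=
  fun p => dz n - ∑ i, dLdv L p i • dq i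

/-- Hessian of `L` with respect to the velocities: `W_{ij} = ∂²L/∂q̇ⁱ∂q̇ʲ`. -/
noncomputable def hessV {n : ℕ} (L : Phase n → ℝ) (p : Phase n) :
    Matrix (Fin n) (Fin n) ℝ :=
  fun i j => fderiv ℝ (fun y => fderiv ℝ L y (0, Pi.single j 1, 0)) p
    (0, Pi.single i 1, 0)

/-- `∂²L/∂q̇ⁱ∂z`. -/
noncomputable def dLdvz {n : ℕ} (L : Phase n → ℝ) (p : Phase n) (i : Fin n) : ℝ :=
  fderiv ℝ (fun y => fderiv ℝ L y ((0 : Fin n → ℝ), (0 : Fin n → ℝ), (1 : ℝ))) p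
    (0, Pi.single i 1, 0)

/-- The energy `E_L = q̇ⁱ ∂L/∂q̇ⁱ - L`. -/
noncomputable def energyL {n : ℕ} (L : Phase n → ℝ) : Phase n → ℝ :=
  fun p => (∑ i, p.2.1 i * dLdv L p i) - L p

/-- Vertical lift of `Y ∈ 𝔛(Q)` to `TQ × ℝ`. -/
noncomputable def vlift {n : ℕ} (Y : (Fin n → ℝ) → (Fin n → ℝ)) :
    Phase n → Phase n :=
  fun p => (0, Y p.1, 0)

/-- Complete lift of `Y ∈ 𝔛(Q)` to `TQ × ℝ`:
`Yⁱ ∂/∂qⁱ + q̇ʲ (∂Yⁱ/∂qʲ) ∂/∂q̇ⁱ`. -/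
noncomputable def clift {n : ℕ} (Y : (Fin n → ℝ) → (Fin n → ℝ)) :
    Phase n → Phase n :=
  fun p => (Y p.1, fderiv ℝ Y p.1 p.2.1, 0)

section
variable {n : ℕ}
lemma base_decomp (a : Fin n → ℝ) : a = ∑ j, a j • (Pi.single j 1 : Fin n → ℝ) := by
  funext k; simp [Finset.sum_apply, Pi.single_apply]

lemma vert_decomp (b : Fin n → ℝ) :
    ((0 : Fin n → ℝ), b, (0:ℝ)) =
      ∑ i, b i • (((0:Fin n→ℝ), Pi.single i 1, (0:ℝ)) : Phase n) := by
  rw [Prod.ext_iff, Prod.ext_iff]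
  refine ⟨?_, ?_, ?_⟩
  · simp [Prod.fst_sum]
  · simp only [Prod.snd_sum, Prod.fst_sum, Prod.smul_mk, smul_zero]
    exact base_decomp b
  · simp [Prod.snd_sum]

lemma clm_vert (φ : Phase n →L[ℝ] ℝ) (b : Fin n → ℝ) :
    φ (0, b, 0) = ∑ i, b i * φ (0, Pi.single i 1, 0) := by
  rw [vert_decomp b, map_sum]; simp only [map_smul, smul_eq_mul]

lemma clm_base (T : (Fin n → ℝ) →L[ℝ] (Fin n → ℝ)) (a : Fin n → ℝ) (i : Fin n) :
    T a i = ∑ j, a j * T (Pi.single j 1) i := by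
  conv_lhs => rw [base_decomp a, map_sum]
  simp [Finset.sum_apply]
end


set_option maxHeartbeats 1000000 in
/-- For a vector field `Y` on `Q` with complete lift `Y^C` and vertical lift
`Y^V`, one has `η_L(Y^C) = -Y^V(L)` and
`L_{Y^C} η_L = -(∂(Y^C(L))/∂q̇ⁱ) dqⁱ`. -/
theorem lifts_and_contact_form {n : ℕ} (L : Phase n → ℝ)
    (Y : (Fin n → ℝ) → (Fin n → ℝ))
    (hL : ContDiff ℝ (⊤ : ℕ∞) L) (hY : ContDiff ℝ (⊤ : ℕ∞) Y) :
    ∀ p,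
      (etaL L p (clift Y p) = -(vfApply (vlift Y) L p)) ∧
      (lieD (clift Y) (etaL L) p
        = -(∑ i, dLdv (vfApply (clift Y) L) p i • dq i)) := by
  intro p
  have hLd : Differentiable ℝ L := hL.differentiable (by simp)
  have hL1 : ContDiff ℝ (⊤ : ℕ∞) (fderiv ℝ L) := hL.fderiv_right (by simp)
  have hYd : Differentiable ℝ Y := hY.differentiable (by simp)
  have hY1 : ContDiff ℝ (⊤ : ℕ∞) (fderiv ℝ Y) := hY.fderiv_right (by simp)
  set e : Fin n → Phase n := fun i => ((0:Fin n→ℝ), Pi.single i 1, (0:ℝ)) with he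
  constructor
  · simp only [etaL, clift, vfApply, vlift, dLdv, ContinuousLinearMap.sub_apply,
      ContinuousLinearMap.sum_apply, ContinuousLinearMap.smul_apply, dz, dq,
      ContinuousLinearMap.comp_apply, ContinuousLinearMap.coe_fst',
      ContinuousLinearMap.coe_snd', ContinuousLinearMap.proj_apply, smul_eq_mul]
    rw [clm_vert (fderiv ℝ L p) (Y p.1), zero_sub, neg_inj]
    exact Finset.sum_congr rfl fun i _ => mul_comm _ _
  · set L'' := fderiv ℝ (fderiv ℝ L) p with hL''def
    have hL'' : HasFDerivAt (fderiv ℝ L) L'' p := (hL1.differentiable (by simp) p).hasFDerivAt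
    have hsymm : ∀ v w, L'' v w = L'' w v :=
      second_derivative_symmetric (fun y => (hLd y).hasFDerivAt) hL''
    set u₀ : Phase n →L[ℝ] (Fin n → ℝ) :=
      (ContinuousLinearMap.fst ℝ (Fin n → ℝ) ℝ).comp
        (ContinuousLinearMap.snd ℝ (Fin n → ℝ) ((Fin n → ℝ) × ℝ)) with hu₀
    set fst₀ : Phase n →L[ℝ] (Fin n → ℝ) :=
      ContinuousLinearMap.fst ℝ (Fin n → ℝ) ((Fin n → ℝ) × ℝ) with hfst₀
    have hc : HasFDerivAt (fun y : Phase n => fderiv ℝ Y y.1)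
        ((fderiv ℝ (fderiv ℝ Y) p.1).comp fst₀) p :=
      ((hY1.differentiable (by simp) p.1).hasFDerivAt).comp p hasFDerivAt_fst
    have hc1 : HasFDerivAt (fun y : Phase n => Y y.1) ((fderiv ℝ Y p.1).comp fst₀) p :=
      ((hYd p.1).hasFDerivAt).comp p hasFDerivAt_fst
    have hA : HasFDerivAt (fun y : Phase n => fderiv ℝ Y y.1 y.2.1)
        ((fderiv ℝ Y p.1).comp u₀ + ((fderiv ℝ (fderiv ℝ Y) p.1).comp fst₀).flip p.2.1) p := by
      exact hc.clm_apply (u₀.hasFDerivAt (x := p))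
    set X' : Phase n →L[ℝ] Phase n :=
      ((fderiv ℝ Y p.1).comp fst₀).prod
        (((fderiv ℝ Y p.1).comp u₀ +
          ((fderiv ℝ (fderiv ℝ Y) p.1).comp fst₀).flip p.2.1).prod 0) with hX'def
    have hX : HasFDerivAt (clift Y) X' p := hc1.prodMk (hA.prodMk (hasFDerivAt_const (0:ℝ) p))
    have hfi : ∀ i : Fin n, HasFDerivAt (fun y => dLdv L y i) (L''.flip (e i)) p := by
      intro i
      have := hL''.clm_apply (hasFDerivAt_const (e i) p)
      simpa [dLdv, he] using this
    have hη : HasFDerivAt (etaL L)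
        (-(∑ i, (L''.flip (e i)).smulRight (dq i))) p := by
      have hs : HasFDerivAt (fun y => ∑ i, dLdv L y i • dq (n := n) i)
          (∑ i, (L''.flip (e i)).smulRight (dq i)) p :=
        HasFDerivAt.fun_sum (fun i _ => (hfi i).smul_const (dq i))
      have := (hasFDerivAt_const (dz n) p).sub hs
      simp only [Pi.sub_def, zero_sub] at this
      exact this
    have hg : HasFDerivAt (vfApply (clift Y) L)
        ((fderiv ℝ L p).comp X' + L''.flip (clift Y p)) p :=
      hL''.clm_apply hX
    have hXe : ∀ i : Fin n, X' (e i) =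
        ((0:Fin n→ℝ), fderiv ℝ Y p.1 (Pi.single i 1), (0:ℝ)) := by
      intro i
      simp [hX'def, hu₀, hfst₀, he, Prod.ext_iff]
    have hgi : ∀ i : Fin n, dLdv (vfApply (clift Y) L) p i =
        (∑ k, (fderiv ℝ Y p.1 (Pi.single i 1)) k * dLdv L p k) + L'' (e i) (clift Y p) := by
      intro i
      have h1 : dLdv (vfApply (clift Y) L) p i
          = ((fderiv ℝ L p).comp X' + L''.flip (clift Y p)) (e i) := by
        rw [dLdv, hg.fderiv]
      rw [h1]
      simp only [ContinuousLinearMap.add_apply, ContinuousLinearMap.comp_apply,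
        ContinuousLinearMap.flip_apply, hXe i]
      rw [clm_vert (fderiv ℝ L p) (fderiv ℝ Y p.1 (Pi.single i 1))]
      rfl
    have hterm1 : ∀ w : Phase n,
        ((-(∑ i, (L''.flip (e i)).smulRight (dq i)) : Phase n →L[ℝ] Phase n →L[ℝ] ℝ)
          (clift Y p)) w
          = -∑ i, L'' (clift Y p) (e i) * w.1 i := by
      intro w
      simp [dq, mul_comm]
    have hterm2 : ∀ w : Phase n, etaL L p (X' w)
        = -∑ i, dLdv L p i * (fderiv ℝ Y p.1 w.1) i := by
      intro w
      have h1 : (X' w).1 = fderiv ℝ Y p.1 w.1 := rfl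
      have h3 : (X' w).2.2 = 0 := rfl
      simp [etaL, dz, dq, h1, h3]
    show fderiv ℝ (etaL L) p (clift Y p) + (etaL L p).comp (fderiv ℝ (clift Y) p)
        = -(∑ i, dLdv (vfApply (clift Y) L) p i • dq i)
    rw [hη.fderiv, hX.fderiv]
    refine ContinuousLinearMap.ext fun w => ?_
    rw [ContinuousLinearMap.add_apply, ContinuousLinearMap.comp_apply, hterm1 w,
      hterm2 w]
    have hrhs : (-(∑ i, dLdv (vfApply (clift Y) L) p i • dq (n := n) i)) w
        = -∑ i, dLdv (vfApply (clift Y) L) p i * w.1 i := by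
      simp [dq]
    rw [hrhs]
    have hswap : ∑ i, dLdv L p i * (fderiv ℝ Y p.1 w.1) i
        = ∑ i, (∑ k, (fderiv ℝ Y p.1 (Pi.single i 1)) k * dLdv L p k) * w.1 i := by
      calc ∑ i, dLdv L p i * (fderiv ℝ Y p.1 w.1) i
          = ∑ i, dLdv L p i * ∑ j, w.1 j * (fderiv ℝ Y p.1 (Pi.single j 1)) i :=
            Finset.sum_congr rfl fun i _ => by rw [clm_base]
        _ = ∑ i, ∑ j, dLdv L p i * (w.1 j * (fderiv ℝ Y p.1 (Pi.single j 1)) i) :=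
            Finset.sum_congr rfl fun i _ => Finset.mul_sum _ _ _
        _ = ∑ j, ∑ i, dLdv L p i * (w.1 j * (fderiv ℝ Y p.1 (Pi.single j 1)) i) :=
            Finset.sum_comm
        _ = ∑ j, (∑ k, (fderiv ℝ Y p.1 (Pi.single j 1)) k * dLdv L p k) * w.1 j := by
            refine Finset.sum_congr rfl fun j _ => ?_
            rw [Finset.sum_mul]
            exact Finset.sum_congr rfl fun k _ => by ring
    have hsymm' : ∀ i : Fin n, L'' (e i) (clift Y p) = L'' (clift Y p) (e i) :=
      fun i => hsymm (e i) (clift Y p)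
    simp only [hgi, add_mul, Finset.sum_add_distrib]
    rw [← hswap]
    simp only [hsymm']
    ring
end

section
/- (Contact Noether theorem) Let L: TQ × ℝ → ℝ be a regular Lagrangian and Y a vector field on Q. Then Y^C(L) = 0 (Y is an infinitesimal symmetry of L) if and only if f = Y^V(L) satisfies ξ_L(f) = (∂L/∂z)·f along the dynamics, i.e. f is a dissipated quantity: {E_L, f} = 0. -/
section A
open ContinuousLinearMap Finset
variable {n : ℕ} (L : Phase n → ℝ)

noncomputable def ev (n : ℕ) (i : Fin n) : Phase n := (0, Pi.single i 1, 0)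
noncomputable def eb (n : ℕ) (i : Fin n) : Phase n := (Pi.single i 1, 0, 0)
noncomputable def ez (n : ℕ) : Phase n := (0, 0, 1)

noncomputable def Pv (i : Fin n) : Phase n → ℝ := fun y => fderiv ℝ L y (ev n i)

lemma Pv_contDiff (hL : ContDiff ℝ (⊤ : ℕ∞) L) (i : Fin n) : ContDiff ℝ (⊤ : ℕ∞) (Pv L i) :=
  (hL.fderiv_right (by simp)).clm_apply contDiff_const

lemma vdecomp (w : Fin n → ℝ) : ((0 : Fin n → ℝ), w, (0:ℝ)) = ∑ i, w i • ev n i := by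
  have h2 : w = ∑ i, w i • (Pi.single i (1:ℝ) : Fin n → ℝ) := by
    ext j
    rw [Finset.sum_apply]
    simp [Pi.single_apply]
  refine Prod.ext ?_ (Prod.ext ?_ ?_) <;>
    simp [ev, Prod.fst_sum, Prod.snd_sum, ← h2]

lemma qdecomp (w : Fin n → ℝ) : ((w : Fin n → ℝ), (0:Fin n → ℝ), (0:ℝ)) = ∑ i, w i • eb n i := by
  have h2 : w = ∑ i, w i • (Pi.single i (1:ℝ) : Fin n → ℝ) := by
    ext j
    rw [Finset.sum_apply]
    simp [Pi.single_apply]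
  refine Prod.ext ?_ (Prod.ext ?_ ?_) <;>
    simp [eb, Prod.fst_sum, Prod.snd_sum, ← h2]

lemma fderiv_apply_v (p : Phase n) (w : Fin n → ℝ) :
    fderiv ℝ L p ((0 : Fin n → ℝ), w, (0:ℝ)) = ∑ i, w i * Pv L i p := by
  rw [vdecomp]
  simp [Pv, smul_eq_mul]

lemma fderiv_apply_q (p : Phase n) (w : Fin n → ℝ) :
    fderiv ℝ L p ((w : Fin n → ℝ), (0:Fin n → ℝ), (0:ℝ)) = ∑ i, w i * fderiv ℝ L p (eb n i) := by
  rw [qdecomp]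
  simp [smul_eq_mul]



lemma etaL_apply (p w : Phase n) :
    etaL L p w = w.2.2 - ∑ i, Pv L i p * w.1 i := by
  simp [etaL, dz, dq, dLdv, Pv, ev, smul_eq_mul]

lemma hasFDerivAt_etaL (hL : ContDiff ℝ (⊤ : ℕ∞) L) (p : Phase n) :
    HasFDerivAt (etaL L) (-(∑ i, (fderiv ℝ (Pv L i) p).smulRight (dq i))) p := by
  have h1 : HasFDerivAt (fun y => ∑ i, dLdv L y i • dq (n := n) i)
      (∑ i, (fderiv ℝ (Pv L i) p).smulRight (dq i)) p :=
    HasFDerivAt.fun_sum fun i _ =>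
      (((Pv_contDiff L hL i).differentiable (by simp) p).hasFDerivAt).smul_const (dq i)
  have h2 := (hasFDerivAt_const (dz n) p).fun_sub h1
  rw [zero_sub] at h2
  exact h2

lemma dEta_etaL (hL : ContDiff ℝ (⊤ : ℕ∞) L) (p u w : Phase n) :
    dEta (etaL L) p u w =
      (∑ i, fderiv ℝ (Pv L i) p w * u.1 i) - ∑ i, fderiv ℝ (Pv L i) p u * w.1 i := by
  have hd := (hasFDerivAt_etaL L hL p).fderiv
  simp [dEta, hd, ContinuousLinearMap.sub_apply, ContinuousLinearMap.flip_apply,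
    ContinuousLinearMap.neg_apply, ContinuousLinearMap.sum_apply,
    ContinuousLinearMap.smulRight_apply, dq, smul_eq_mul]
  ring

noncomputable def dv (n : ℕ) (i : Fin n) : Phase n →L[ℝ] ℝ :=
  (ContinuousLinearMap.proj i).comp
    ((ContinuousLinearMap.fst ℝ _ _).comp (ContinuousLinearMap.snd ℝ _ _))

lemma dv_apply (i : Fin n) (u : Phase n) : dv n i u = u.2.1 i := rfl

lemma hasFDerivAt_dv (i : Fin n) (p : Phase n) :
    HasFDerivAt (fun y : Phase n => y.2.1 i) (dv n i) p :=
  (ContinuousLinearMap.proj (R := ℝ) (φ := fun _ : Fin n => ℝ) i).hasFDerivAt.comp p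
    (hasFDerivAt_snd.fst)

lemma fderiv_energy (hL : ContDiff ℝ (⊤ : ℕ∞) L) (p u : Phase n) :
    fderiv ℝ (energyL L) p u =
      (∑ i, (u.2.1 i * Pv L i p + p.2.1 i * fderiv ℝ (Pv L i) p u)) - fderiv ℝ L p u := by
  have h1 : HasFDerivAt (energyL L)
      ((∑ i, (Pv L i p • dv n i + p.2.1 i • fderiv ℝ (Pv L i) p)) - fderiv ℝ L p) p := by
    refine HasFDerivAt.sub (HasFDerivAt.fun_sum fun i _ => ?_)
      ((hL.differentiable (by simp) p).hasFDerivAt)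
    have := (hasFDerivAt_dv i p).fun_mul
      (((Pv_contDiff L hL i).differentiable (by simp) p).hasFDerivAt)
    rw [add_comm] at this
    exact this
  rw [h1.fderiv]
  simp [dv_apply, smul_eq_mul, Finset.sum_add_distrib, mul_comm]


@[simp] lemma ev1 (i : Fin n) : (ev n i).1 = 0 := rfl
@[simp] lemma ev21 (i : Fin n) : (ev n i).2.1 = Pi.single i 1 := rfl
@[simp] lemma ev22 (i : Fin n) : (ev n i).2.2 = 0 := rfl
@[simp] lemma eb1 (i : Fin n) : (eb n i).1 = Pi.single i 1 := rfl
@[simp] lemma eb21 (i : Fin n) : (eb n i).2.1 = 0 := rfl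
@[simp] lemma eb22 (i : Fin n) : (eb n i).2.2 = 0 := rfl
@[simp] lemma ez1 : (ez n).1 = 0 := rfl
@[simp] lemma ez21 : (ez n).2.1 = 0 := rfl
@[simp] lemma ez22 : (ez n).2.2 = 1 := rfl

lemma hessV_eq (p : Phase n) (j i : Fin n) :
    hessV L p j i = fderiv ℝ (Pv L i) p (ev n j) := rfl

lemma fderiv_ev (p : Phase n) (j : Fin n) : fderiv ℝ L p (ev n j) = Pv L j p := rfl
lemma fderiv_ezl (p : Phase n) : fderiv ℝ L p (ez n) = dLdz L p := rfl

lemma f_eq (Y : (Fin n → ℝ) → (Fin n → ℝ)) (p : Phase n) :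
    vfApply (vlift Y) L p = ∑ i, Y p.1 i * Pv L i p :=
  fderiv_apply_v L p (Y p.1)

lemma fderiv_pi_comp (Y : (Fin n → ℝ) → (Fin n → ℝ)) (hY : ContDiff ℝ (⊤ : ℕ∞) Y)
    (i : Fin n) (q v : Fin n → ℝ) :
    fderiv ℝ (fun x => Y x i) q v = fderiv ℝ Y q v i := by
  have h := (hY.differentiable (by simp) q).hasFDerivAt
  have h2 : HasFDerivAt (fun x => Y x i)
      ((ContinuousLinearMap.proj (R := ℝ) (φ := fun _ : Fin n => ℝ) i).comp (fderiv ℝ Y q)) q :=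
    (ContinuousLinearMap.proj (R := ℝ) (φ := fun _ : Fin n => ℝ) i).hasFDerivAt.comp q h
  rw [h2.fderiv]; rfl

lemma fderiv_f (Y : (Fin n → ℝ) → (Fin n → ℝ)) (hL : ContDiff ℝ (⊤ : ℕ∞) L)
    (hY : ContDiff ℝ (⊤ : ℕ∞) Y) (p u : Phase n) :
    fderiv ℝ (vfApply (vlift Y) L) p u =
      ∑ i, (Y p.1 i * fderiv ℝ (Pv L i) p u
        + Pv L i p * fderiv ℝ (fun x => Y x i) p.1 u.1) := by
  have hfe : vfApply (vlift Y) L = fun y => ∑ i, Y y.1 i * Pv L i y :=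
    funext fun y => f_eq L Y y
  rw [hfe]
  have h1 : HasFDerivAt (fun y : Phase n => ∑ i, Y y.1 i * Pv L i y)
      (∑ i, (Y p.1 i • fderiv ℝ (Pv L i) p
        + Pv L i p • ((fderiv ℝ (fun x => Y x i) p.1).comp (ContinuousLinearMap.fst ℝ _ _)))) p := by
    refine HasFDerivAt.fun_sum fun i _ => ?_
    have hYi : ContDiff ℝ (⊤ : ℕ∞) (fun x => Y x i) := contDiff_pi.mp hY i
    have hc : HasFDerivAt (fun y : Phase n => Y y.1 i)
        ((fderiv ℝ (fun x => Y x i) p.1).comp (ContinuousLinearMap.fst ℝ _ _)) p :=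
      HasFDerivAt.comp p ((hYi.differentiable (by simp) p.1).hasFDerivAt) hasFDerivAt_fst
    exact hc.mul (((Pv_contDiff L hL i).differentiable (by simp) p).hasFDerivAt)
  rw [h1.fderiv]
  simp [ContinuousLinearMap.sum_apply, smul_eq_mul]

lemma clift_apply (Y : (Fin n → ℝ) → (Fin n → ℝ)) (p : Phase n) :
    vfApply (clift Y) L p =
      (∑ i, Y p.1 i * fderiv ℝ L p (eb n i)) + ∑ i, fderiv ℝ Y p.1 p.2.1 i * Pv L i p := by
  show fderiv ℝ L p (clift Y p) = _
  have hsplit : (clift Y p)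
      = ((Y p.1, (0 : Fin n → ℝ), (0:ℝ)) : Phase n)
        + (((0 : Fin n → ℝ), fderiv ℝ Y p.1 p.2.1, (0:ℝ)) : Phase n) := by
    simp [clift, Prod.ext_iff]
  rw [hsplit, map_add, fderiv_apply_q, fderiv_apply_v]

end A

/-- Contact Noether theorem: `Y^C(L) = 0` iff `f = Y^V(L)` is a dissipated
quantity, i.e. `ξ_L(f) = (∂L/∂z)·f`. -/
theorem contact_noether {n : ℕ} (L : Phase n → ℝ)
    (Y : (Fin n → ℝ) → (Fin n → ℝ)) (RL ξL : Phase n → Phase n)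
    (hL : ContDiff ℝ (⊤ : ℕ∞) L) (hY : ContDiff ℝ (⊤ : ℕ∞) Y)
    (hreg : ∀ p, IsUnit (hessV L p))
    (hRL : IsReeb (etaL L) RL)
    (hξL : IsHamVF (etaL L) RL (energyL L) ξL) :
    (∀ p, vfApply (clift Y) L p = 0) ↔
    (∀ p, vfApply ξL (vfApply (vlift Y) L) p
      = dLdz L p * vfApply (vlift Y) L p) := by
  have key : ∀ p, vfApply ξL (vfApply (vlift Y) L) p
      = vfApply (clift Y) L p + dLdz L p * vfApply (vlift Y) L p := by
    intro p
    have hev : ∀ w, dEta (etaL L) p (ξL p) w + etaL L p (ξL p) * etaL L p w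
        = fderiv ℝ (energyL L) p w
          - (vfApply RL (energyL L) p + energyL L p) * etaL L p w := by
      intro w
      have h := DFunLike.congr_fun (hξL p) w
      simpa [flatMap, ContinuousLinearMap.add_apply, ContinuousLinearMap.smulRight_apply,
        ContinuousLinearMap.sub_apply, ContinuousLinearMap.smul_apply, smul_eq_mul] using h
    have hηξ : etaL L p (ξL p) = -(energyL L p) := by
      obtain ⟨hR1, hR2⟩ := hRL p
      have h := hev (RL p)
      have hanti : dEta (etaL L) p (ξL p) (RL p) = 0 := by
        have h1 : dEta (etaL L) p (ξL p) (RL p) = - dEta (etaL L) p (RL p) (ξL p) := by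
          simp [dEta, ContinuousLinearMap.sub_apply, ContinuousLinearMap.flip_apply]
        rw [h1, hR2]
        ring
      rw [hanti, hR1] at h
      have hre : vfApply RL (energyL L) p = fderiv ℝ (energyL L) p (RL p) := rfl
      rw [hre] at h
      linarith
    set κ := vfApply RL (energyL L) p + energyL L p with hκdef
    have hev2 : ∀ w, dEta (etaL L) p (ξL p) w
        = fderiv ℝ (energyL L) p w + (energyL L p - κ) * etaL L p w := by
      intro w
      have h := hev w
      rw [hηξ] at h
      linear_combination h
    have hz : ∀ j, ∑ i, fderiv ℝ (Pv L i) p (ev n j) * ((ξL p).1 i - p.2.1 i) = 0 := by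
      intro j
      have h := hev2 (ev n j)
      rw [dEta_etaL L hL, fderiv_energy L hL, etaL_apply, fderiv_ev L] at h
      simp [Pi.single_apply, Finset.sum_add_distrib, ite_mul, mul_ite] at h
      simp only [mul_sub, Finset.sum_sub_distrib, h, sub_eq_zero]
      exact Finset.sum_congr rfl fun i _ => mul_comm _ _
    have hAv : (ξL p).1 = p.2.1 := by
      have hmv : (hessV L p).mulVec ((ξL p).1 - p.2.1) = 0 := by
        funext j
        have := hz j
        simpa [Matrix.mulVec, dotProduct, hessV_eq L] using this
      have hdet : IsUnit (hessV L p).det := (Matrix.isUnit_iff_isUnit_det _).mp (hreg p)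
      have h0 := congrArg ((hessV L p)⁻¹.mulVec) hmv
      rw [Matrix.mulVec_mulVec, Matrix.nonsing_inv_mul _ hdet, Matrix.one_mulVec,
        Matrix.mulVec_zero] at h0
      exact sub_eq_zero.mp h0
    have hκE : κ = energyL L p - dLdz L p := by
      have h := hev2 (ez n)
      rw [dEta_etaL L hL, fderiv_energy L hL, etaL_apply, fderiv_ezl L, hAv] at h
      simp [Finset.sum_add_distrib] at h
      have hc : ∑ x : Fin n, p.2.1 x * fderiv ℝ (Pv L x) p (ez n)
          = ∑ i : Fin n, fderiv ℝ (Pv L i) p (ez n) * p.2.1 i :=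
        Finset.sum_congr rfl fun i _ => mul_comm _ _
      rw [hc] at h
      linarith
    have hHer : ∀ j, fderiv ℝ (Pv L j) p (ξL p)
        = fderiv ℝ L p (eb n j) + dLdz L p * Pv L j p := by
      intro j
      have h := hev2 (eb n j)
      rw [dEta_etaL L hL, fderiv_energy L hL, etaL_apply, hAv, hκE] at h
      simp [Pi.single_apply, Finset.sum_add_distrib, ite_mul, mul_ite,
        Finset.sum_sub_distrib] at h
      have hc : ∑ x : Fin n, p.2.1 x * fderiv ℝ (Pv L x) p (eb n j)
          = ∑ i : Fin n, fderiv ℝ (Pv L i) p (eb n j) * p.2.1 i :=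
        Finset.sum_congr rfl fun i _ => mul_comm _ _
      rw [hc] at h
      linarith
    have hfp : vfApply ξL (vfApply (vlift Y) L) p
        = fderiv ℝ (vfApply (vlift Y) L) p (ξL p) := rfl
    rw [hfp, fderiv_f L Y hL hY p (ξL p), clift_apply L Y p, f_eq L Y p]
    have hstep : ∑ i, (Y p.1 i * fderiv ℝ (Pv L i) p (ξL p)
          + Pv L i p * fderiv ℝ (fun x => Y x i) p.1 (ξL p).1)
        = ∑ i, (Y p.1 i * fderiv ℝ L p (eb n i) + fderiv ℝ Y p.1 p.2.1 i * Pv L i p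
          + dLdz L p * (Y p.1 i * Pv L i p)) :=
      Finset.sum_congr rfl fun i _ => by
        rw [hHer i, hAv, fderiv_pi_comp Y hY]
        ring
    rw [hstep]
    rw [Finset.sum_add_distrib, Finset.sum_add_distrib, ← Finset.mul_sum]
  constructor
  · intro h p
    have hk := key p
    rw [h p] at hk
    linarith
  · intro h p
    have hk := key p
    rw [h p] at hk
    linarith
end
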